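/- arXiv:2305.17541 — 8 statements merged into one kernel-verified Lean document; each statement's English description precedes it below -/
import Mathlib

section
/- Let P be a finite poset, M a maximal chain in P, and C a maximal chain in P. If B is the set of all y in M that are comparable to every element of C \ M, then C ∩ M = B. In other words, a maximal chain C is uniquely determined by its intersection with the complement of M. -/
theorem maximal_chain_determined_by_complement {α : Type*} [Fintype α] [PartialOrder α]
    (M C : Set α) (hM : IsMaxChain (· ≤ ·) M) (hC : IsMaxChain (· ≤ ·) C) :
    C ∩ M = {y ∈ M | ∀ x ∈ C \ M, y ≤ x ∨ x ≤ y} := by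
  ext y
  simp only [Set.mem_inter_iff, Set.mem_setOf_eq, Set.mem_diff]
  constructor
  · rintro ⟨hyC, hyM⟩
    refine ⟨hyM, fun x ⟨hxC, _⟩ => ?_⟩
    rcases eq_or_ne y x with rfl | hne
    · exact Or.inl le_rfl
    · exact hC.1 hyC hxC hne
  · rintro ⟨hyM, hcomp⟩
    refine ⟨?_, hyM⟩
    have hchain : IsChain (· ≤ ·) (insert y C) := by
      refine hC.1.insert fun x hxC hne => ?_
      by_cases hxM : x ∈ M
      · exact hM.1 hyM hxM hne
      · exact hcomp x ⟨hxC, hxM⟩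
    have := hC.2 hchain (Set.subset_insert y C)
    rw [this]
    exact Set.mem_insert y C
end

section
/- Let P be a finite poset, let S be the multiset of cardinalities of all maximal chains in P, let m = max(S), and let n = |S| (the number of maximal chains). Then |P| ≥ m + log₂(n). -/
open scoped Classical in
/-- The finite set of maximal chains of a finite poset, as finsets. -/
noncomputable def maxChains (α : Type*) [Fintype α] [PartialOrder α] : Finset (Finset α) :=
  Finset.univ.filter (fun s : Finset α => IsMaxChain (· ≤ ·) (s : Set α))

/-- The multiset of cardinalities of the maximal chains of a finite poset. -/
noncomputable def mcMultiset (α : Type*) [Fintype α] [PartialOrder α] : Multiset ℕ :=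
  (maxChains α).val.map Finset.card

open scoped Classical in
/-- In a maximal chain `D`, the part inside a chain `C` is determined by the part outside. -/
lemma maxchain_inter_eq {α : Type*} [PartialOrder α] {C D : Finset α}
    (hD : IsMaxChain (· ≤ ·) (D : Set α)) (hC : IsChain (· ≤ ·) (C : Set α)) :
    D ∩ C = C.filter (fun c => ∀ e ∈ D \ C, c ≤ e ∨ e ≤ c) := by
  classical
  ext c
  simp only [Finset.mem_inter, Finset.mem_filter, Finset.mem_sdiff]
  constructor
  · rintro ⟨hcD, hcC⟩
    refine ⟨hcC, fun e he => ?_⟩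
    by_cases h : c = e
    · exact Or.inl (le_of_eq h)
    · exact hD.1 hcD he.1 h
  · rintro ⟨hcC, hcomp⟩
    have hchain : IsChain (· ≤ ·) (insert c (D : Set α)) := by
      refine hD.1.insert fun b hb hne => ?_
      by_cases hbC : b ∈ C
      · exact hC hcC hbC hne
      · exact hcomp b ⟨hb, hbC⟩
    have := hD.2 hchain (Set.subset_insert _ _)
    have hcD : c ∈ D := by
      have : c ∈ (D : Set α) := this ▸ Set.mem_insert _ _
      exact_mod_cast this
    exact ⟨hcD, hcC⟩

theorem poset_card_lower_bound {α : Type*} [Fintype α] [PartialOrder α] (m : ℕ)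
    (hm : m ∈ mcMultiset α) (hmax : ∀ x ∈ mcMultiset α, x ≤ m) :
    (m : ℝ) + Real.logb 2 (Multiset.card (mcMultiset α)) ≤ Fintype.card α := by
  classical
  obtain ⟨C, hCmem, hCm⟩ : ∃ C ∈ (maxChains α).val, C.card = m := by
    simpa [mcMultiset, Multiset.mem_map] using hm
  have hCmem' : C ∈ maxChains α := hCmem
  have hCmax : IsMaxChain (· ≤ ·) (C : Set α) := by
    simpa [maxChains] using hCmem'
  have hmle : m ≤ Fintype.card α := by
    rw [← hCm]
    simpa using Finset.card_le_card (Finset.subset_univ C)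
  -- key injectivity
  have hinj : Set.InjOn (fun D => D \ C) (maxChains α : Set (Finset α)) := by
    intro D1 h1 D2 h2 h
    simp only at h
    have hm1 : IsMaxChain (· ≤ ·) (D1 : Set α) := by simpa [maxChains] using h1
    have hm2 : IsMaxChain (· ≤ ·) (D2 : Set α) := by simpa [maxChains] using h2
    have e1 := maxchain_inter_eq hm1 hCmax.1
    have e2 := maxchain_inter_eq hm2 hCmax.1
    rw [h] at e1
    calc D1 = D1 \ C ∪ D1 ∩ C := (Finset.sdiff_union_inter _ _).symm
      _ = D2 \ C ∪ D2 ∩ C := by rw [e1, e2, h]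
      _ = D2 := Finset.sdiff_union_inter _ _
  have hmaps : ∀ D ∈ maxChains α, D \ C ∈ (Finset.univ \ C).powerset := by
    intro D _
    simp [Finset.mem_powerset, Finset.sdiff_subset_sdiff (Finset.subset_univ D) le_rfl]
  have hcard : (maxChains α).card ≤ 2 ^ (Fintype.card α - m) := by
    have := Finset.card_le_card_of_injOn (fun D => D \ C) hmaps hinj
    rwa [Finset.card_powerset, Finset.card_univ_diff, hCm] at this
  have hn : Multiset.card (mcMultiset α) = (maxChains α).card := by
    simp [mcMultiset]
  have hn1 : 1 ≤ (maxChains α).card := Finset.card_pos.mpr ⟨C, hCmem'⟩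
  have hlog : Real.logb 2 (Multiset.card (mcMultiset α)) ≤ (Fintype.card α - m : ℕ) := by
    rw [hn]
    have h1 : ((maxChains α).card : ℝ) ≤ (2 : ℝ) ^ (Fintype.card α - m) := by
      exact_mod_cast hcard
    calc Real.logb 2 ((maxChains α).card)
        ≤ Real.logb 2 ((2 : ℝ) ^ (Fintype.card α - m)) := by
          have h0 : (0:ℝ) < ((maxChains α).card : ℝ) := by exact_mod_cast hn1
          exact Real.logb_le_logb_of_le one_lt_two h0 h1
      _ = (Fintype.card α - m : ℕ) := by
          rw [← Real.rpow_natCast 2, Real.logb_rpow two_pos (by norm_num)]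
  have hsub : ((Fintype.card α - m : ℕ) : ℝ) = (Fintype.card α : ℝ) - m :=
    Nat.cast_sub hmle
  linarith [hlog, hsub ▸ hlog]
end

section
/- Let P be a finite poset with at least one element, M a maximal chain of P with |M| = m, and X = P \ M with |X| = k. Then the number of maximal chains of P is at most 2^k. -/
/-!
Two maximal chains that agree outside a chain `M` are equal: if `a ∈ M` lay in one but not the
other, maximality would give an element `b` of the second chain incomparable to `a`; such a `b`
cannot lie in the chain `M`, so it lies in the first chain too, which is impossible. Hence
`s ↦ s \ M` embeds the maximal chains into the subsets of the complement of `M`.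
-/

section Chains

variable {α : Type*} {r : α → α → Prop} {s t M : Set α}

theorem IsMaxChain.exists_not_comparable_of_notMem (ht : IsMaxChain r t) {a : α} (ha : a ∉ t) :
    ∃ b ∈ t, a ≠ b ∧ ¬(r a b ∨ r b a) := by
  by_contra! hcomp
  exact ha (ht.2 (ht.1.insert hcomp) (Set.subset_insert a t) ▸ Set.mem_insert a t)

theorem IsChain.subset_of_diff_eq (hM : IsChain r M) (hs : IsChain r s) (ht : IsMaxChain r t)
    (hst : s \ M = t \ M) : s ⊆ t := by
  intro a has
  by_contra hat
  have haM : a ∈ M := by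
    by_contra haM
    exact hat (hst ▸ ⟨has, haM⟩ : a ∈ t \ M).1
  obtain ⟨b, hbt, hab, hnc⟩ := ht.exists_not_comparable_of_notMem hat
  have hbM : b ∉ M := fun hbM => hnc (hM haM hbM hab)
  have hbs : b ∈ s := (hst ▸ ⟨hbt, hbM⟩ : b ∈ s \ M).1
  exact hnc (hs has hbs hab)

theorem IsChain.injOn_diff_isMaxChain (hM : IsChain r M) :
    {s : Set α | IsMaxChain r s}.InjOn (· \ M) := fun _ hs _ ht hst =>
  (hM.subset_of_diff_eq hs.1 ht hst).antisymm (hM.subset_of_diff_eq ht.1 hs hst.symm)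

end Chains

open scoped Classical in
theorem num_maximal_chains_le_pow_general {α : Type*} [Fintype α] [PartialOrder α]
    (M : Finset α) (hM : IsMaxChain (· ≤ ·) (M : Set α)) :
    (maxChains α).card ≤ 2 ^ (Finset.univ \ M).card := by
  rw [← Finset.card_powerset]
  refine Finset.card_le_card_of_injOn (· \ M) (fun s _ => ?_) fun s hs t ht hst => ?_
  · exact Finset.mem_powerset.2 (Finset.sdiff_subset_sdiff (Finset.subset_univ s) le_rfl)
  · simp only [maxChains, Finset.coe_filter, Finset.mem_univ, true_and] at hs ht
    exact Finset.coe_injective <| hM.1.injOn_diff_isMaxChain hs ht <| by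
      simpa only [Finset.coe_sdiff] using congrArg ((↑) : Finset α → Set α) hst

open scoped Classical in
theorem num_maximal_chains_le_pow {α : Type*} [Fintype α] [PartialOrder α] [Nonempty α]
    (M : Finset α) (hM : IsMaxChain (· ≤ ·) (M : Set α)) :
    (maxChains α).card ≤ 2 ^ (Finset.univ \ M).card :=
  num_maximal_chains_le_pow_general M hM
end

section
/- For every nonempty finite multiset S of positive integers with maximum element m and cardinality n (counting multiplicities), there exists a finite poset P of cardinality m + n − 1 whose multiset of maximal chain cardinalities equals S. -/
/-!
Take a chain of `m - 1` points (the spine) and, for each element `x` of `S`, a maximal point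
(a tip) lying exactly above the first `x - 1` spine points. Down-sets of tips are chains of
size `x`, and nothing lies above a tip, so these down-sets are maximal chains. Conversely, a
maximal chain must contain a tip: otherwise the tip of `m`, which lies above the whole spine,
could be added to it. Hence the maximal chains are exactly the down-sets of the tips.
-/

open Set Function

section MaxChain

variable {α : Type*} [PartialOrder α] {a : α} {c : Set α}

theorem IsChain.subset_Iic_of_isMax (hc : IsChain (· ≤ ·) c) (ha : IsMax a) (hac : a ∈ c) :
    c ⊆ Iic a :=
  fun _ hx => (hc.total hx hac).elim id (@ha _)

theorem IsMaxChain.mem_of_mem_upperBounds (hc : IsMaxChain (· ≤ ·) c) (ha : a ∈ upperBounds c) :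
    a ∈ c :=
  (hc.2 (hc.1.insert fun _ hx _ => Or.inr (ha hx)) (subset_insert _ _)).symm ▸ mem_insert _ _

theorem IsMaxChain.eq_Iic_of_isMax (hc : IsMaxChain (· ≤ ·) c) (ha : IsMax a) (hac : a ∈ c)
    (hIic : IsChain (· ≤ ·) (Iic a)) : c = Iic a :=
  hc.2 hIic (hc.1.subset_Iic_of_isMax ha hac)

theorem isMaxChain_Iic (ha : IsMax a) (hIic : IsChain (· ≤ ·) (Iic a)) :
    IsMaxChain (· ≤ ·) (Iic a) :=
  ⟨hIic, fun _ ht hsub => hsub.antisymm (ht.subset_Iic_of_isMax ha (hsub (mem_Iic.2 le_rfl)))⟩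

end MaxChain

theorem mem_maxChains {α : Type*} [Fintype α] [PartialOrder α] {s : Finset α} :
    s ∈ maxChains α ↔ IsMaxChain (· ≤ ·) (s : Set α) := by
  simp [maxChains]

theorem mcMultiset_eq_map {α ι : Type*} [Fintype α] [PartialOrder α] [Fintype ι]
    (c : ι ↪ Finset α) (hc : ∀ s : Finset α, IsMaxChain (· ≤ ·) (s : Set α) ↔ ∃ k, c k = s) :
    mcMultiset α = Finset.univ.val.map fun k => (c k).card := by
  have hmax : maxChains α = Finset.univ.map c := by
    ext s
    simp [mem_maxChains, hc]
  rw [mcMultiset, hmax, Finset.map_val, Multiset.map_map]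
  rfl

inductive Fan {ι : Type*} (b : ℕ) (h : ι → ℕ)
  | spine : Fin b → Fan b h
  | tip : ι → Fan b h

namespace Fan

variable {ι : Type*} {b : ℕ} {h : ι → ℕ}

def equivSum : Fan b h ≃ Fin b ⊕ ι where
  toFun
    | spine i => .inl i
    | tip k => .inr k
  invFun
    | .inl i => spine i
    | .inr k => tip k
  left_inv x := by cases x <;> rfl
  right_inv x := by cases x <;> rfl

instance [Fintype ι] : Fintype (Fan b h) := Fintype.ofEquiv _ equivSum.symm

theorem card_eq [Fintype ι] : Fintype.card (Fan b h) = b + Fintype.card ι := by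
  simp [Fintype.card_congr equivSum]

protected def LE : Fan b h → Fan b h → Prop
  | spine i, spine j => i ≤ j
  | spine i, tip k => i < h k
  | tip _, spine _ => False
  | tip k, tip l => k = l

instance : PartialOrder (Fan b h) where
  le := Fan.LE
  le_refl := by rintro (i | k) <;> grind [Fan.LE]
  le_trans := by rintro (i | k) (j | l) (j' | l') <;> grind [Fan.LE]
  le_antisymm := by rintro (i | k) (j | l) <;> grind [Fan.LE]

@[simp] theorem spine_le_spine {i j : Fin b} : (spine i : Fan b h) ≤ spine j ↔ i ≤ j := Iff.rfl
@[simp] theorem spine_le_tip {i : Fin b} {k : ι} : (spine i : Fan b h) ≤ tip k ↔ i < h k := Iff.rfl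
@[simp] theorem not_tip_le_spine {i : Fin b} {k : ι} : ¬(tip k : Fan b h) ≤ spine i := id
@[simp] theorem tip_le_tip {k l : ι} : (tip k : Fan b h) ≤ tip l ↔ k = l := Iff.rfl

theorem isMax_tip (k : ι) : IsMax (tip k : Fan b h) := by
  rintro (i | l) hl <;> simp_all

theorem isChain_range_spine : IsChain (· ≤ ·) (range (spine : Fin b → Fan b h)) :=
  Monotone.isChain_range fun _ _ => spine_le_spine.2

theorem Iio_tip_subset_range_spine (k : ι) : Iio (tip k : Fan b h) ⊆ range spine := by
  rintro (i | l) hl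
  · exact mem_range_self i
  · exact absurd hl (isMax_tip l).not_lt

theorem isChain_Iic_tip (k : ι) : IsChain (· ≤ ·) (Iic (tip k : Fan b h)) := by
  rw [← Iio_insert]
  exact (isChain_range_spine.mono (Iio_tip_subset_range_spine k)).insert
    fun _ hx _ => Or.inr (le_of_lt hx)

theorem isMaxChain_iff (hk : ∃ k, b ≤ h k) {s : Set (Fan b h)} :
    IsMaxChain (· ≤ ·) s ↔ ∃ k, Iic (tip k) = s := by
  refine ⟨fun hs => ?_, ?_⟩
  · obtain ⟨k, hks⟩ : ∃ k, tip k ∈ s := by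
      by_contra! hno
      obtain ⟨k, hk⟩ := hk
      refine hno k (hs.mem_of_mem_upperBounds ?_)
      rintro (i | l) hl
      · exact spine_le_tip.2 (i.isLt.trans_le hk)
      · exact absurd hl (hno l)
    exact ⟨k, (hs.eq_Iic_of_isMax (isMax_tip k) hks (isChain_Iic_tip k)).symm⟩
  · rintro ⟨k, rfl⟩
    exact isMaxChain_Iic (isMax_tip k) (isChain_Iic_tip k)

@[simps]
def spineEmbedding : Fin b ↪ Fan b h := ⟨spine, fun _ _ => spine.inj⟩

def tipChain (k : ι) : Finset (Fan b h) :=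
  .cons (tip k) (.map spineEmbedding {i | (i : ℕ) < h k}) (by simp)

theorem coe_tipChain (k : ι) :
    ((tipChain k : Finset (Fan b h)) : Set (Fan b h)) = Iic (tip k) := by
  ext (i | l) <;> simp [tipChain]

theorem card_tipChain (k : ι) : (tipChain k : Finset (Fan b h)).card = min b (h k) + 1 := by
  simp [tipChain, Fin.card_filter_val_lt]

theorem tipChain_injective : Injective (tipChain : ι → Finset (Fan b h)) := by
  intro k l hkl
  have hk : (tip k : Fan b h) ∈ tipChain l := hkl ▸ Finset.mem_cons_self _ _
  simpa [tipChain] using hk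

theorem mcMultiset_eq [Fintype ι] (hk : ∃ k, b ≤ h k) :
    mcMultiset (Fan b h) = Finset.univ.val.map fun k => min b (h k) + 1 := by
  rw [mcMultiset_eq_map ⟨tipChain, tipChain_injective⟩ fun s => by
    simp [isMaxChain_iff hk, ← coe_tipChain]]
  simp [card_tipChain]

end Fan

theorem exists_poset_of_multiset (S : Multiset ℕ) (hpos : ∀ x ∈ S, 0 < x)
    (m : ℕ) (hm : m ∈ S) (hmax : ∀ x ∈ S, x ≤ m) :
    ∃ (α : Type) (i1 : Fintype α) (i2 : PartialOrder α),
      @Fintype.card α i1 = m + Multiset.card S - 1 ∧ @mcMultiset α i1 i2 = S := by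
  have hm₀ : 0 < m := hpos m hm
  refine ⟨Fan (m - 1) fun x : S => (x : ℕ) - 1, inferInstance, inferInstance, ?_, ?_⟩
  · rw [Fan.card_eq, Multiset.card_coe]
    omega
  · rw [Fan.mcMultiset_eq ⟨S.mkToType m ⟨0, Multiset.count_pos.2 hm⟩, by simp⟩]
    refine (Multiset.map_univ S fun x => min (m - 1) (x - 1) + 1).trans
      ((Multiset.map_congr rfl fun x hx => ?_).trans S.map_id')
    have := hpos x hx
    have := hmax x hx
    omega
end

section
/- Let k be a positive integer and a₁,…,a_k nonnegative integers. Let sums(A) be the multiset of all subset sums Σ_{i∈J} a_i over J ⊆ {1,…,k}, and let S = {k + x : x ∈ sums(A)} (a multiset of size 2^k). Then there exists a finite poset of cardinality 2k + Σᵢ aᵢ whose multiset of maximal chain cardinalities equals S. Consequently the lower bound |P| ≥ max(S) + log₂|S| is attained. -/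
/-!
Let `P` be the ordinal sum, over `i`, of a point beside a chain with `aᵢ + 1` elements, so that
`|P| = 2k + Σ aᵢ`. A chain of an ordinal sum is maximal iff its trace on every summand is maximal,
and a point beside a chain has exactly two maximal chains: the point and the chain. Hence the
maximal chains of `P` correspond to the subsets `J` of summands in which the chain is taken, and the
one for `J` has `k + Σ_{i ∈ J} aᵢ` elements. There are `2^k` of them, so `log₂ |S| = k` is exactly
the gap between `|P|` and `max S = k + Σ aᵢ`.
-/

open Set

theorem isMaxChain_iff_forall_comparable_mem {α : Type*} {r : α → α → Prop} {s : Set α} :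
    IsMaxChain r s ↔ IsChain r s ∧ ∀ x, (∀ y ∈ s, x ≠ y → r x y ∨ r y x) → x ∈ s := by
  refine ⟨fun h => ⟨h.1, fun x hx => ?_⟩, fun ⟨hs, hmem⟩ => ⟨hs, fun t ht hst => ?_⟩⟩
  · rw [h.2 (h.1.insert hx) (subset_insert x s)]
    exact mem_insert x s
  · exact hst.antisymm fun x hxt => hmem x fun y hys hxy => ht hxt (hst hys) hxy

namespace Sigma.Lex

variable {ι : Type*} {β : ι → Type*}

def fiber (s : Set (Σₗ i, β i)) (i : ι) : Set (β i) :=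
  {x | toLex ⟨i, x⟩ ∈ s}

theorem ext_fiber {s t : Set (Σₗ i, β i)} (h : ∀ i, fiber s i = fiber t i) : s = t := by
  ext ⟨i, x⟩
  exact Set.ext_iff.mp (h i) x

theorem mk_le_mk_iff [Preorder ι] [∀ i, LE (β i)] {i : ι}
    {x y : β i} : toLex (⟨i, x⟩ : Σ i, β i) ≤ toLex ⟨i, y⟩ ↔ x ≤ y := by
  refine ⟨?_, fun h => Sigma.Lex.right _ _ h⟩
  rintro (⟨_, _, h⟩ | ⟨_, _, h⟩)
  exacts [absurd h (lt_irrefl i), h]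

theorem mk_le_mk_of_lt [LT ι] [∀ i, LE (β i)] {i j : ι}
    {x : β i} {y : β j} (h : i < j) : toLex (⟨i, x⟩ : Σ i, β i) ≤ toLex ⟨j, y⟩ :=
  le_def.mpr (Or.inl h)

variable [LinearOrder ι] [∀ i, PartialOrder (β i)]

theorem forall_comparable_mk_iff {s : Set (Σₗ i, β i)} {i : ι} {x : β i} :
    (∀ q ∈ s, toLex ⟨i, x⟩ ≠ q → toLex ⟨i, x⟩ ≤ q ∨ q ≤ toLex ⟨i, x⟩) ↔
      ∀ y ∈ fiber s i, x ≠ y → x ≤ y ∨ y ≤ x := by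
  refine ⟨fun h y hy hxy => ?_, fun h => ?_⟩
  · exact (h _ hy (by simpa using hxy)).imp mk_le_mk_iff.mp mk_le_mk_iff.mp
  · rintro ⟨j, y⟩ hy hne
    rcases lt_trichotomy i j with hij | rfl | hji
    · exact Or.inl (mk_le_mk_of_lt hij)
    · exact (h y hy (by rintro rfl; exact hne rfl)).imp mk_le_mk_iff.mpr mk_le_mk_iff.mpr
    · exact Or.inr (mk_le_mk_of_lt hji)

theorem isChain_iff {s : Set (Σₗ i, β i)} :
    IsChain (· ≤ ·) s ↔ ∀ i, IsChain (· ≤ ·) (fiber s i) := by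
  refine ⟨fun h i x hx y hy hxy => ?_, fun h => ?_⟩
  · exact forall_comparable_mk_iff.mp (fun q hq => h hx hq) y hy hxy
  · rintro ⟨i, x⟩ hx q hq
    exact forall_comparable_mk_iff.mpr (fun y hy => h i hx hy) q hq

theorem isMaxChain_iff {s : Set (Σₗ i, β i)} :
    IsMaxChain (· ≤ ·) s ↔ ∀ i, IsMaxChain (· ≤ ·) (fiber s i) := by
  simp only [isMaxChain_iff_forall_comparable_mem, forall_and, isChain_iff]
  refine and_congr_right fun _ => ⟨fun h i x hx => h _ (forall_comparable_mk_iff.mpr hx), ?_⟩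
  rintro h ⟨i, x⟩ hx
  exact h i x (forall_comparable_mk_iff.mp hx)

end Sigma.Lex

section Sum

variable {α β : Type*}

theorem isMaxChain_range_inl [LinearOrder α] [Preorder β] [Nonempty α] :
    IsMaxChain (· ≤ ·) (range (Sum.inl : α → α ⊕ β)) := by
  refine isMaxChain_iff_forall_comparable_mem.mpr ⟨Sum.inl_mono.isChain_range, ?_⟩
  rintro (a | b) h
  · exact mem_range_self a
  · obtain ⟨a⟩ := ‹Nonempty α›
    rcases h _ (mem_range_self a) Sum.inr_ne_inl with h | h <;> simp at h

theorem isMaxChain_range_inr [Preorder α] [LinearOrder β] [Nonempty β] :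
    IsMaxChain (· ≤ ·) (range (Sum.inr : β → α ⊕ β)) := by
  refine isMaxChain_iff_forall_comparable_mem.mpr ⟨Sum.inr_mono.isChain_range, ?_⟩
  rintro (a | b) h
  · obtain ⟨b⟩ := ‹Nonempty β›
    rcases h _ (mem_range_self b) Sum.inl_ne_inr with h | h <;> simp at h
  · exact mem_range_self b

theorem isMaxChain_sum_iff [LinearOrder α] [LinearOrder β] [Nonempty α] [Nonempty β]
    {c : Set (α ⊕ β)} : IsMaxChain (· ≤ ·) c ↔ c = range Sum.inl ∨ c = range Sum.inr := by
  refine ⟨fun h => ?_, by rintro (rfl | rfl); exacts [isMaxChain_range_inl, isMaxChain_range_inr]⟩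
  obtain ⟨a | b, hp⟩ := h.nonempty_iff.mp inferInstance
  · refine Or.inl (h.2 isMaxChain_range_inl.1 fun q hq => ?_)
    rcases q with a' | b'
    · exact mem_range_self a'
    · rcases h.1 hp hq Sum.inl_ne_inr with h | h <;> simp at h
  · refine Or.inr (h.2 isMaxChain_range_inr.1 fun q hq => ?_)
    rcases q with a' | b'
    · rcases h.1 hp hq Sum.inr_ne_inl with h | h <;> simp at h
    · exact mem_range_self b'

end Sum

section Construction

variable {k : ℕ} (a : Fin k → ℕ)

abbrev PointChainSum := Σₗ i : Fin k, Unit ⊕ Fin (a i + 1)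

def chainOfSubset (J : Finset (Fin k)) : Finset (PointChainSum a) :=
  (Finset.univ.sigma fun i => if i ∈ J then Finset.univ.map .inr else Finset.univ.map .inl).map
    toLex.toEmbedding

theorem fiber_chainOfSubset (J : Finset (Fin k)) (i : Fin k) :
    Sigma.Lex.fiber (chainOfSubset a J : Set (PointChainSum a)) i =
      if i ∈ J then range Sum.inr else range Sum.inl := by
  ext (_ | _) <;> split_ifs <;> simp [Sigma.Lex.fiber, chainOfSubset, *]

theorem isMaxChain_iff_exists_chainOfSubset {s : Finset (PointChainSum a)} :
    IsMaxChain (· ≤ ·) (s : Set (PointChainSum a)) ↔ ∃ J, s = chainOfSubset a J := by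
  classical
  simp only [Sigma.Lex.isMaxChain_iff, isMaxChain_sum_iff]
  refine ⟨fun h => ⟨({i | Sigma.Lex.fiber (s : Set (PointChainSum a)) i = range Sum.inr} :
    Finset (Fin k)), ?_⟩, ?_⟩
  · refine Finset.coe_injective (Sigma.Lex.ext_fiber fun i => ?_)
    rw [fiber_chainOfSubset]
    rcases h i with hi | hi <;> simp [hi]
  · rintro ⟨J, rfl⟩ i
    rw [fiber_chainOfSubset]
    split_ifs <;> simp

theorem chainOfSubset_injective : Function.Injective (chainOfSubset a) := by
  have hmem (J : Finset (Fin k)) (i : Fin k) :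
      i ∈ J ↔ Sum.inr 0 ∈ Sigma.Lex.fiber (chainOfSubset a J : Set (PointChainSum a)) i := by
    rw [fiber_chainOfSubset]
    split_ifs <;> simp [*]
  intro J J' h
  ext i
  rw [hmem J, hmem J', h]

theorem card_chainOfSubset (J : Finset (Fin k)) : (chainOfSubset a J).card = k + ∑ i ∈ J, a i := by
  rw [chainOfSubset, Finset.card_map, Finset.card_sigma]
  calc ∑ i, (if i ∈ J then Finset.univ.map .inr else Finset.univ.map .inl).card
      _ = ∑ i, (1 + if i ∈ J then a i else 0) :=
        Finset.sum_congr rfl fun i _ => by split_ifs <;> simp [add_comm]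
      _ = k + ∑ i ∈ J, a i := by simp [Finset.sum_add_distrib]

theorem card_pointChainSum : Fintype.card (PointChainSum a) = 2 * k + ∑ i, a i := by
  simp only [Fintype.card_lex, Fintype.card_sigma, Fintype.card_sum, Fintype.card_unique,
    Fintype.card_fin, Finset.sum_add_distrib, Finset.sum_const, Finset.card_univ, smul_eq_mul,
    mul_one]
  omega

theorem maxChains_pointChainSum :
    maxChains (PointChainSum a) = Finset.univ.powerset.image (chainOfSubset a) := by
  ext s
  simp [maxChains, isMaxChain_iff_exists_chainOfSubset, eq_comm]

theorem mcMultiset_pointChainSum :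
    mcMultiset (PointChainSum a) = Finset.univ.powerset.val.map fun J => k + ∑ i ∈ J, a i := by
  rw [mcMultiset, maxChains_pointChainSum,
    Finset.image_val_of_injOn (chainOfSubset_injective a).injOn, Multiset.map_map]
  exact Multiset.map_congr rfl fun J _ => card_chainOfSubset a J

end Construction

theorem lower_bound_attained_general (k : ℕ) (a : Fin k → ℕ) :
    ∃ (α : Type) (i1 : Fintype α) (i2 : PartialOrder α),
      @Fintype.card α i1 = 2 * k + ∑ i, a i ∧
      @mcMultiset α i1 i2 =
        ((Finset.univ : Finset (Fin k)).powerset.val.map (fun J => k + ∑ i ∈ J, a i)) ∧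
      ((2 * k + ∑ i, a i : ℕ) : ℝ) =
        ((k + ∑ i, a i : ℕ) : ℝ) +
          Real.logb 2 (Multiset.card
            (((Finset.univ : Finset (Fin k)).powerset.val.map (fun J => k + ∑ i ∈ J, a i)))) := by
  refine ⟨PointChainSum a, inferInstance, inferInstance, card_pointChainSum a,
    mcMultiset_pointChainSum a, ?_⟩
  have hcard : Multiset.card ((Finset.univ : Finset (Fin k)).powerset.val.map
      fun J => k + ∑ i ∈ J, a i) = 2 ^ k := by simp
  rw [hcard, Nat.cast_pow, Nat.cast_ofNat, Real.logb_pow, Real.logb_self_eq_one one_lt_two]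
  push_cast
  ring

theorem lower_bound_attained (k : ℕ) (hk : 0 < k) (a : Fin k → ℕ) :
    ∃ (α : Type) (i1 : Fintype α) (i2 : PartialOrder α),
      @Fintype.card α i1 = 2 * k + ∑ i, a i ∧
      @mcMultiset α i1 i2 =
        ((Finset.univ : Finset (Fin k)).powerset.val.map (fun J => k + ∑ i ∈ J, a i)) ∧
      ((2 * k + ∑ i, a i : ℕ) : ℝ) =
        ((k + ∑ i, a i : ℕ) : ℝ) +
          Real.logb 2 (Multiset.card
            (((Finset.univ : Finset (Fin k)).powerset.val.map (fun J => k + ∑ i ∈ J, a i)))) :=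
  lower_bound_attained_general k a
end

section
/- Let P be a finite poset with no splitting element, and let M = {t₁ < t₂ < ⋯ < t_m} be a maximal chain of P. Then the index of every in-edge of M is strictly greater than the index of every out-edge of M. That is, if y ≺ t_i with y ∉ M and t_j ≺ z with z ∉ M, then j < i. -/
/-- `x` is a splitting element: the suborder of elements `≤ x` has more than one
maximal chain and the suborder of elements `≥ x` has more than one maximal chain. -/
def IsSplitting {α : Type*} [PartialOrder α] (x : α) : Prop :=
  (∃ C₁ C₂ : Set (Set.Iic x), IsMaxChain (· ≤ ·) C₁ ∧ IsMaxChain (· ≤ ·) C₂ ∧ C₁ ≠ C₂) ∧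
  (∃ C₁ C₂ : Set (Set.Ici x), IsMaxChain (· ≤ ·) C₁ ∧ IsMaxChain (· ≤ ·) C₂ ∧ C₁ ≠ C₂)

open Set

lemma IsMaxChain.exists_isMaxChain_ne_of_notMem {β : Type*} {r : β → β → Prop} {C : Set β}
    (hC : IsMaxChain r C) {y : β} (hy : y ∉ C) :
    ∃ C₁ C₂ : Set β, IsMaxChain r C₁ ∧ IsMaxChain r C₂ ∧ C₁ ≠ C₂ := by
  obtain ⟨D, hD, hyD⟩ := (IsChain.singleton (r := r) (a := y)).exists_maxChain
  exact ⟨C, D, hC, hD, fun hCD => hy (hCD ▸ hyD rfl)⟩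

section PartialOrder

variable {α : Type*} [PartialOrder α] {M : Set α}

lemma IsMaxChain.preimage_subtypeVal {S : Set α} (hM : IsMaxChain (· ≤ ·) M)
    (hS : ∀ a ∈ S, ∀ b ∈ M, b ∉ S → a ≤ b ∨ b ≤ a) :
    IsMaxChain (· ≤ ·) (Subtype.val ⁻¹' M : Set S) := by
  refine ⟨hM.1.preimage _ _ _ Subtype.val_injective fun _ _ h => h,
    fun C hC hsub => hsub.antisymm fun a ha => ?_⟩
  have hchain : IsChain (· ≤ ·) (insert (a : α) M) := hM.1.insert fun b hb _ => by
    by_cases hbS : b ∈ S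
    · exact hC.total ha (hsub (show (⟨b, hbS⟩ : S) ∈ Subtype.val ⁻¹' M from hb))
    · exact hS a a.2 b hb hbS
  exact hM.2 hchain (subset_insert _ _) ▸ mem_insert _ _

lemma IsMaxChain.preimage_Iic (hM : IsMaxChain (· ≤ ·) M) {x : α} (hx : x ∈ M) :
    IsMaxChain (· ≤ ·) (Subtype.val ⁻¹' M : Set (Iic x)) :=
  hM.preimage_subtypeVal fun _ ha _ hb hbx =>
    Or.inl (le_trans ha ((hM.1.total hx hb).resolve_right hbx))

lemma IsMaxChain.preimage_Ici (hM : IsMaxChain (· ≤ ·) M) {x : α} (hx : x ∈ M) :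
    IsMaxChain (· ≤ ·) (Subtype.val ⁻¹' M : Set (Ici x)) :=
  hM.preimage_subtypeVal fun _ ha _ hb hxb =>
    Or.inr (le_trans ((hM.1.total hx hb).resolve_left hxb) ha)

end PartialOrder

theorem in_edge_index_gt_out_edge_index_general {α : Type*} [PartialOrder α]
    (hsplit : ∀ x : α, ¬ IsSplitting x)
    (m : ℕ) (t : Fin m → α) (ht : StrictMono t)
    (hM : IsMaxChain (· ≤ ·) (Set.range t)) :
    ∀ (i j : Fin m) (y z : α), y ∉ Set.range t → z ∉ Set.range t →
      y ⋖ t i → t j ⋖ z → j < i := by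
  intro i j y z hy hz hyi hjz
  by_contra! hij
  refine hsplit (t i) ⟨?_, ?_⟩
  · exact (hM.preimage_Iic (mem_range_self i)).exists_isMaxChain_ne_of_notMem
      (y := ⟨y, hyi.le⟩) hy
  · exact (hM.preimage_Ici (mem_range_self i)).exists_isMaxChain_ne_of_notMem
      (y := ⟨z, (ht.monotone hij).trans hjz.le⟩) hz

theorem in_edge_index_gt_out_edge_index {α : Type*} [Fintype α] [PartialOrder α]
    (hsplit : ∀ x : α, ¬ IsSplitting x)
    (m : ℕ) (t : Fin m → α) (ht : StrictMono t)
    (hM : IsMaxChain (· ≤ ·) (Set.range t)) :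
    ∀ (i j : Fin m) (y z : α), y ∉ Set.range t → z ∉ Set.range t →
      y ⋖ t i → t j ⋖ z → j < i :=
  in_edge_index_gt_out_edge_index_general hsplit m t ht hM
end

section
/- Let P be a finite poset, M = {t₁ < ⋯ < t_m} a maximal chain of P, and suppose there exist an in-edge of M with index i and an out-edge of M with index j where i ≤ j. Then for every k with i ≤ k ≤ j, the element t_k is a splitting element of P. -/
lemma aux_maxchain_Iic {α : Type*} [PartialOrder α] {m : ℕ} {t : Fin m → α} (ht : StrictMono t)
    (hM : IsMaxChain (· ≤ ·) (Set.range t)) (k : Fin m) :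
    IsMaxChain (· ≤ ·) {p : Set.Iic (t k) | (p : α) ∈ Set.range t} := by
  constructor
  · intro p hp q hq hne
    obtain ⟨a, ha⟩ := hp
    obtain ⟨b, hb⟩ := hq
    rcases le_total a b with h | h
    · exact Or.inl (show (p : α) ≤ q by rw [← ha, ← hb]; exact ht.monotone h)
    · exact Or.inr (show (q : α) ≤ p by rw [← hb, ← ha]; exact ht.monotone h)
  · intro C' hC' hsub
    refine hsub.antisymm ?_
    intro w hw
    by_contra hwr
    have hwr' : (w : α) ∉ Set.range t := hwr
    have key : ∀ l : Fin m, (w : α) ≤ t l ∨ t l ≤ (w : α) := by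
      intro l
      rcases le_total l k with hl0 | hl0
      · have hl : t l ≤ t k := ht.monotone hl0
        have hmem : (⟨t l, hl⟩ : Set.Iic (t k)) ∈ C' := hsub ⟨l, rfl⟩
        have hne : (⟨t l, hl⟩ : Set.Iic (t k)) ≠ w := by
          intro h; exact hwr' ⟨l, congrArg Subtype.val h⟩
        rcases hC' hmem hw hne with h | h
        · exact Or.inr h
        · exact Or.inl h
      · exact Or.inl (le_trans w.2 (ht.monotone hl0))
    have hchain : IsChain (· ≤ ·) (insert (w : α) (Set.range t)) := by
      intro a ha b hb hab
      rcases Set.mem_insert_iff.1 ha with ha | ⟨la, rfl⟩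
      · rcases Set.mem_insert_iff.1 hb with hb | ⟨lb, rfl⟩
        · exact absurd (ha.trans hb.symm) hab
        · subst ha; exact key lb
      · rcases Set.mem_insert_iff.1 hb with hb | ⟨lb, rfl⟩
        · subst hb
          rcases key la with h | h
          · exact Or.inr h
          · exact Or.inl h
        · rcases le_total la lb with h | h
          · exact Or.inl (ht.monotone h)
          · exact Or.inr (ht.monotone h)
    have heq := hM.2 hchain (Set.subset_insert _ _)
    exact hwr' (heq ▸ Set.mem_insert _ _)

lemma aux_maxchain_Ici {α : Type*} [PartialOrder α] {m : ℕ} {t : Fin m → α} (ht : StrictMono t)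
    (hM : IsMaxChain (· ≤ ·) (Set.range t)) (k : Fin m) :
    IsMaxChain (· ≤ ·) {p : Set.Ici (t k) | (p : α) ∈ Set.range t} := by
  constructor
  · intro p hp q hq hne
    obtain ⟨a, ha⟩ := hp
    obtain ⟨b, hb⟩ := hq
    rcases le_total a b with h | h
    · exact Or.inl (show (p : α) ≤ q by rw [← ha, ← hb]; exact ht.monotone h)
    · exact Or.inr (show (q : α) ≤ p by rw [← hb, ← ha]; exact ht.monotone h)
  · intro C' hC' hsub
    refine hsub.antisymm ?_
    intro w hw
    by_contra hwr
    have hwr' : (w : α) ∉ Set.range t := hwr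
    have key : ∀ l : Fin m, (w : α) ≤ t l ∨ t l ≤ (w : α) := by
      intro l
      rcases le_total k l with hl0 | hl0
      · have hl : t k ≤ t l := ht.monotone hl0
        have hmem : (⟨t l, hl⟩ : Set.Ici (t k)) ∈ C' := hsub ⟨l, rfl⟩
        have hne : (⟨t l, hl⟩ : Set.Ici (t k)) ≠ w := by
          intro h; exact hwr' ⟨l, congrArg Subtype.val h⟩
        rcases hC' hmem hw hne with h | h
        · exact Or.inr h
        · exact Or.inl h
      · exact Or.inr (le_trans (ht.monotone hl0) w.2)
    have hchain : IsChain (· ≤ ·) (insert (w : α) (Set.range t)) := by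
      intro a ha b hb hab
      rcases Set.mem_insert_iff.1 ha with ha | ⟨la, rfl⟩
      · rcases Set.mem_insert_iff.1 hb with hb | ⟨lb, rfl⟩
        · exact absurd (ha.trans hb.symm) hab
        · subst ha; exact key lb
      · rcases Set.mem_insert_iff.1 hb with hb | ⟨lb, rfl⟩
        · subst hb
          rcases key la with h | h
          · exact Or.inr h
          · exact Or.inl h
        · rcases le_total la lb with h | h
          · exact Or.inl (ht.monotone h)
          · exact Or.inr (ht.monotone h)
    have heq := hM.2 hchain (Set.subset_insert _ _)
    exact hwr' (heq ▸ Set.mem_insert _ _)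

theorem between_in_and_out_edge_is_splitting {α : Type*} [Fintype α] [PartialOrder α]
    (m : ℕ) (t : Fin m → α) (ht : StrictMono t)
    (hM : IsMaxChain (· ≤ ·) (Set.range t))
    (i j : Fin m) (y z : α) (hy : y ∉ Set.range t) (hz : z ∉ Set.range t)
    (hyi : y ⋖ t i) (hjz : t j ⋖ z) (hij : i ≤ j) :
    ∀ k : Fin m, i ≤ k → k ≤ j → IsSplitting (t k) := by
  intro k hik hkj
  constructor
  · have hyk : y ∈ Set.Iic (t k) := le_trans hyi.le (ht.monotone hik)
    have hC₁ := aux_maxchain_Iic ht hM k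
    have hsing : IsChain (· ≤ ·) ({⟨y, hyk⟩} : Set (Set.Iic (t k))) :=
      Set.subsingleton_singleton.isChain
    obtain ⟨C₂, hC₂, hsub⟩ := hsing.exists_maxChain
    refine ⟨_, C₂, hC₁, hC₂, ?_⟩
    intro h
    have hmem : (⟨y, hyk⟩ : Set.Iic (t k)) ∈ {p : Set.Iic (t k) | (p : α) ∈ Set.range t} :=
      h ▸ hsub rfl
    exact hy hmem
  · have hzk : z ∈ Set.Ici (t k) := le_trans (ht.monotone hkj) hjz.le
    have hC₁ := aux_maxchain_Ici ht hM k
    have hsing : IsChain (· ≤ ·) ({⟨z, hzk⟩} : Set (Set.Ici (t k))) :=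
      Set.subsingleton_singleton.isChain
    obtain ⟨C₂, hC₂, hsub⟩ := hsing.exists_maxChain
    refine ⟨_, C₂, hC₁, hC₂, ?_⟩
    intro h
    have hmem : (⟨z, hzk⟩ : Set.Ici (t k)) ∈ {p : Set.Ici (t k) | (p : α) ∈ Set.range t} :=
      h ▸ hsub rfl
    exact hz hmem
end

section
/- Let P be a finite poset and M = {t₁ < ⋯ < t_m} a maximal chain such that every in-edge of M has index strictly greater than every out-edge of M. Then every maximal chain C of P contains the endpoints of at most one in-edge of M and at most one out-edge of M. -/
/-!
Suppose a chain `C` contains the in-edges `(y, tᵢ)` and `(y', tᵢ')` with `i < i'`. Then `y'` is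
comparable with `tᵢ`. The case `y' < tᵢ < tᵢ'` is impossible because `tᵢ'` covers `y'`. In the case
`tᵢ < y'`, let `tₖ` be the last element of `M` below `y'`; an element covering `tₖ` inside `(tₖ, y']`
lies outside `M`, which gives an out-edge of index `k ≥ i`, against the hypothesis. So `i = i'`, and
two comparable elements covered by `tᵢ` are equal. Out-edges are the order-dual case.
-/

open Set OrderDual

section ChainEdges

variable {ι α : Type*}

theorem toDual_mem_range_dual {f : ι → α} {x : α} :
    toDual x ∈ range (toDual ∘ f ∘ ofDual) ↔ x ∈ range f :=
  ⟨fun ⟨i, h⟩ => ⟨ofDual i, toDual.injective h⟩, fun ⟨i, h⟩ => ⟨toDual i, congrArg toDual h⟩⟩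

variable [PartialOrder α]

theorem IsChain.eq_of_covBy {C : Set α} (hC : IsChain (· ≤ ·) C) {a b c : α} (haC : a ∈ C)
    (hbC : b ∈ C) (hac : a ⋖ c) (hbc : b ⋖ c) : a = b := by
  rcases hC.total haC hbC with hab | hba
  · exact hab.eq_of_not_lt fun h => hac.2 h hbc.1
  · exact (hba.eq_of_not_lt fun h => hbc.2 h hac.1).symm

def IsInEdge (f : ι → α) (y : α) (i : ι) : Prop := y ∉ range f ∧ y ⋖ f i

def IsOutEdge (f : ι → α) (i : ι) (z : α) : Prop := z ∉ range f ∧ f i ⋖ z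

variable {f : ι → α}

theorem isInEdge_dual_iff {i : ι} {z : α} :
    IsInEdge (toDual ∘ f ∘ ofDual) (toDual z) (toDual i) ↔ IsOutEdge f i z := by
  rw [IsInEdge, IsOutEdge, toDual_mem_range_dual]
  exact and_congr_right' toDual_covBy_toDual_iff

theorem isOutEdge_dual_iff {i : ι} {y : α} :
    IsOutEdge (toDual ∘ f ∘ ofDual) (toDual i) (toDual y) ↔ IsInEdge f y i := by
  rw [IsInEdge, IsOutEdge, toDual_mem_range_dual]
  exact and_congr_right' toDual_covBy_toDual_iff

variable [LinearOrder ι]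

def InEdgesAboveOutEdges (f : ι → α) : Prop :=
  ∀ i j y z, IsInEdge f y i → IsOutEdge f j z → j < i

theorem InEdgesAboveOutEdges.dual (h : InEdgesAboveOutEdges f) :
    InEdgesAboveOutEdges (toDual ∘ f ∘ ofDual) := fun i j y z hy hz =>
  h (ofDual j) (ofDual i) (ofDual z) (ofDual y) (isOutEdge_dual_iff.1 hz) (isInEdge_dual_iff.1 hy)

variable [Finite ι]

theorem exists_isOutEdge_of_lt [IsStronglyAtomic α] (hf : StrictMono f) {i : ι} {x : α}
    (hx : x ∉ range f) (hix : f i < x) : ∃ k z, i ≤ k ∧ IsOutEdge f k z := by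
  obtain ⟨k, hkx, hk_max⟩ := exists_max_image {k | f k < x} id (toFinite _) ⟨i, hix⟩
  obtain ⟨z, hkz, hzx⟩ := exists_covBy_le_of_lt hkx
  refine ⟨k, z, hk_max i hix, ?_, hkz⟩
  rintro ⟨l, rfl⟩
  have hlx : f l < x := hzx.lt_of_ne fun h => hx ⟨l, h⟩
  exact (hk_max l hlx).not_gt (hf.lt_iff_lt.1 hkz.lt)

variable (hf : StrictMono f) (hsep : InEdgesAboveOutEdges f) {C : Set α} (hC : IsChain (· ≤ ·) C)
include hf hsep hC

theorem IsChain.le_of_isInEdge [IsStronglyAtomic α] {i i' : ι} {y y' : α} (hy : IsInEdge f y i)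
    (hy' : IsInEdge f y' i') (hiC : f i ∈ C) (hy'C : y' ∈ C) : i' ≤ i := by
  by_contra! hii'
  have hne : f i ≠ y' := fun h => hy'.1 ⟨i, h⟩
  rcases hC.total hiC hy'C with hle | hle
  · obtain ⟨k, z, hik, hz⟩ := exists_isOutEdge_of_lt hf hy'.1 (hle.lt_of_ne hne)
    exact (hsep i k y z hy hz).not_ge hik
  · exact hy'.2.2 (hle.lt_of_ne hne.symm) (hf hii')

theorem IsChain.eq_of_isInEdge [IsStronglyAtomic α] {i i' : ι} {y y' : α} (hy : IsInEdge f y i)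
    (hy' : IsInEdge f y' i') (hyC : y ∈ C) (hiC : f i ∈ C) (hy'C : y' ∈ C) (hi'C : f i' ∈ C) :
    y = y' ∧ i = i' := by
  have hii' : i = i' :=
    (hC.le_of_isInEdge hf hsep hy' hy hi'C hyC).antisymm (hC.le_of_isInEdge hf hsep hy hy' hiC hy'C)
  subst hii'
  exact ⟨hC.eq_of_covBy hyC hy'C hy.2 hy'.2, rfl⟩

theorem IsChain.eq_of_isOutEdge [IsStronglyCoatomic α] {j j' : ι} {z z' : α}
    (hz : IsOutEdge f j z) (hz' : IsOutEdge f j' z') (hzC : z ∈ C) (hjC : f j ∈ C)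
    (hz'C : z' ∈ C) (hj'C : f j' ∈ C) : z = z' ∧ j = j' := by
  have := IsChain.eq_of_isInEdge (C := ofDual ⁻¹' C) hf.dual hsep.dual hC.symm
    (isInEdge_dual_iff.2 hz) (isInEdge_dual_iff.2 hz') hzC hjC hz'C hj'C
  simpa using this

end ChainEdges

theorem max_chain_at_most_one_in_out_edge_general {α : Type*} [Fintype α] [PartialOrder α]
    (m : ℕ) (t : Fin m → α) (ht : StrictMono t)
    (hidx : ∀ (i j : Fin m) (y z : α), y ∉ Set.range t → z ∉ Set.range t →
      y ⋖ t i → t j ⋖ z → j < i) :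
    ∀ C : Set α, IsMaxChain (· ≤ ·) C →
      (∀ (i i' : Fin m) (y y' : α), y ∉ Set.range t → y' ∉ Set.range t →
        y ⋖ t i → y' ⋖ t i' → y ∈ C → t i ∈ C → y' ∈ C → t i' ∈ C → y = y' ∧ i = i') ∧
      (∀ (j j' : Fin m) (z z' : α), z ∉ Set.range t → z' ∉ Set.range t →
        t j ⋖ z → t j' ⋖ z' → z ∈ C → t j ∈ C → z' ∈ C → t j' ∈ C → z = z' ∧ j = j') := by
  intro C hC
  have hsep : InEdgesAboveOutEdges t := fun i j y z hy hz => hidx i j y z hy.1 hz.1 hy.2 hz.2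
  exact ⟨fun _ _ _ _ hy hy' hyi hyi' => hC.1.eq_of_isInEdge ht hsep ⟨hy, hyi⟩ ⟨hy', hyi'⟩,
    fun _ _ _ _ hz hz' hjz hjz' => hC.1.eq_of_isOutEdge ht hsep ⟨hz, hjz⟩ ⟨hz', hjz'⟩⟩

theorem max_chain_at_most_one_in_out_edge {α : Type*} [Fintype α] [PartialOrder α]
    (m : ℕ) (t : Fin m → α) (ht : StrictMono t)
    (hM : IsMaxChain (· ≤ ·) (Set.range t))
    (hidx : ∀ (i j : Fin m) (y z : α), y ∉ Set.range t → z ∉ Set.range t →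
      y ⋖ t i → t j ⋖ z → j < i) :
    ∀ C : Set α, IsMaxChain (· ≤ ·) C →
      (∀ (i i' : Fin m) (y y' : α), y ∉ Set.range t → y' ∉ Set.range t →
        y ⋖ t i → y' ⋖ t i' → y ∈ C → t i ∈ C → y' ∈ C → t i' ∈ C → y = y' ∧ i = i') ∧
      (∀ (j j' : Fin m) (z z' : α), z ∉ Set.range t → z' ∉ Set.range t →
        t j ⋖ z → t j' ⋖ z' → z ∈ C → t j ∈ C → z' ∈ C → t j' ∈ C → z = z' ∧ j = j') :=
  max_chain_at_most_one_in_out_edge_general m t ht hidx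
end
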